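/- arXiv:2411.17582 — 3 statements merged into one kernel-verified Lean document; each statement's English description precedes it below -/
import Mathlib

section
/- Let T be a positive integer, and suppose for each t ∈ {1,…,T} we have real numbers x_t ∈ X, p_t ∈ [0,1], y_t ∈ {0,1}, real-valued functions f_t(p), and loss functions ℓ. If (1) for all t, Σ_t ∂ℓ(x_t, π_ℓ(x_t,p_t))·(p_t − y_t) ≤ R₁ in absolute value (decision OI), (2) Σ_t ∂ℓ(x_t, h(x_t))·(p_t − y_t) ≤ R₂ in absolute value for all h ∈ H (hypothesis OI), and (3) π_ℓ(x,p) minimizes ŷ ↦ p·ℓ(x,ŷ,1) + (1−p)·ℓ(x,ŷ,0), then Σ_t ℓ(x_t, π_ℓ(x_t,p_t), y_t) ≤ min_{h∈H} Σ_t ℓ(x_t, h(x_t), y_t) + R₁ + R₂. -/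
/-- Online loss-OI implies omniprediction: decision OI plus hypothesis OI
(with respect to a finite comparator class `H`) implies the omniprediction
regret bound with regret `R₁ + R₂`. -/
theorem loss_oi_implies_omniprediction {X : Type*} (T : ℕ) (hT : 0 < T)
    (x : ℕ → X) (p : ℕ → ℝ) (y : ℕ → ℝ)
    (hp : ∀ t < T, p t ∈ Set.Icc (0 : ℝ) 1)
    (hy : ∀ t < T, y t = 0 ∨ y t = 1)
    (ℓ : X → ℝ → ℝ → ℝ) (π : X → ℝ → ℝ)
    (H : Finset (X → ℝ)) (hHrange : ∀ h ∈ H, ∀ x', h x' ∈ Set.Icc (0 : ℝ) 1)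
    (R₁ R₂ : ℝ)
    -- (3) π(x,p) minimizes ŷ ↦ p·ℓ(x,ŷ,1) + (1−p)·ℓ(x,ŷ,0) over ŷ ∈ [0,1]
    (hπmem : ∀ (x' : X) (q : ℝ), q ∈ Set.Icc (0 : ℝ) 1 → π x' q ∈ Set.Icc (0 : ℝ) 1)
    (hπmin : ∀ (x' : X) (q : ℝ), q ∈ Set.Icc (0 : ℝ) 1 →
      ∀ yhat ∈ Set.Icc (0 : ℝ) 1,
        q * ℓ x' (π x' q) 1 + (1 - q) * ℓ x' (π x' q) 0
          ≤ q * ℓ x' yhat 1 + (1 - q) * ℓ x' yhat 0)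
    -- (1) decision OI
    (hDOI : |∑ t ∈ Finset.range T,
        (ℓ (x t) (π (x t) (p t)) 1 - ℓ (x t) (π (x t) (p t)) 0) * (p t - y t)| ≤ R₁)
    -- (2) hypothesis OI
    (hHOI : ∀ h ∈ H, |∑ t ∈ Finset.range T,
        (ℓ (x t) (h (x t)) 1 - ℓ (x t) (h (x t)) 0) * (p t - y t)| ≤ R₂) :
    ∀ h ∈ H,
      ∑ t ∈ Finset.range T, ℓ (x t) (π (x t) (p t)) (y t)
        ≤ ∑ t ∈ Finset.range T, ℓ (x t) (h (x t)) (y t) + R₁ + R₂ := by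
  intro h hH
  have key : ∀ (yh : ℕ → ℝ), ∀ t ∈ Finset.range T,
      ℓ (x t) (yh t) (y t)
        = (p t * ℓ (x t) (yh t) 1 + (1 - p t) * ℓ (x t) (yh t) 0)
          - (ℓ (x t) (yh t) 1 - ℓ (x t) (yh t) 0) * (p t - y t) := by
    intro yh t ht
    rcases hy t (Finset.mem_range.mp ht) with h0 | h1
    · rw [h0]; ring_nf
    · rw [h1]; ring_nf
  have split : ∀ (yh : ℕ → ℝ),
      ∑ t ∈ Finset.range T, ℓ (x t) (yh t) (y t)
        = (∑ t ∈ Finset.range T, (p t * ℓ (x t) (yh t) 1 + (1 - p t) * ℓ (x t) (yh t) 0))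
          - ∑ t ∈ Finset.range T, (ℓ (x t) (yh t) 1 - ℓ (x t) (yh t) 0) * (p t - y t) := by
    intro yh
    rw [← Finset.sum_sub_distrib]
    exact Finset.sum_congr rfl (key yh)
  have hπh : ∀ t ∈ Finset.range T,
      p t * ℓ (x t) (π (x t) (p t)) 1 + (1 - p t) * ℓ (x t) (π (x t) (p t)) 0
        ≤ p t * ℓ (x t) (h (x t)) 1 + (1 - p t) * ℓ (x t) (h (x t)) 0 := by
    intro t ht
    exact hπmin (x t) (p t) (hp t (Finset.mem_range.mp ht)) (h (x t)) (hHrange h hH (x t))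
  have h1 := abs_le.mp hDOI
  have h2 := abs_le.mp (hHOI h hH)
  calc ∑ t ∈ Finset.range T, ℓ (x t) (π (x t) (p t)) (y t)
      = (∑ t ∈ Finset.range T, (p t * ℓ (x t) (π (x t) (p t)) 1 + (1 - p t) * ℓ (x t) (π (x t) (p t)) 0))
          - ∑ t ∈ Finset.range T, (ℓ (x t) (π (x t) (p t)) 1 - ℓ (x t) (π (x t) (p t)) 0) * (p t - y t) :=
        split (fun t => π (x t) (p t))
    _ ≤ (∑ t ∈ Finset.range T, (p t * ℓ (x t) (h (x t)) 1 + (1 - p t) * ℓ (x t) (h (x t)) 0)) + R₁ := by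
        have := Finset.sum_le_sum hπh
        linarith [h1.1]
    _ = (∑ t ∈ Finset.range T, ℓ (x t) (h (x t)) (y t)
          + ∑ t ∈ Finset.range T, (ℓ (x t) (h (x t)) 1 - ℓ (x t) (h (x t)) 0) * (p t - y t)) + R₁ := by
        have := split (fun t => h (x t))
        linarith
    _ ≤ ∑ t ∈ Finset.range T, ℓ (x t) (h (x t)) (y t) + R₁ + R₂ := by
        linarith [h2.2]
end

section
/- Let S : [0,1] → ℝ be a function, y ∈ ℝ, and let q, q' ∈ [0,1] with S(q) and S(q') of opposite signs (S(q)·S(q') ≤ 0 and not both zero). Set τ = |S(q')| / (|S(q)| + |S(q')|). Then τ·S(q)·(y − q) + (1−τ)·S(q')·(y − q') = τ·S(q)·(q' − q). -/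
/-- Forecast hedging identity: with τ = |S(q')|/(|S(q)|+|S(q')|) and S(q), S(q')
of opposite signs (not both zero),
τ·S(q)·(y − q) + (1−τ)·S(q')·(y − q') = τ·S(q)·(q' − q). -/
theorem forecast_hedging_identity (S : ℝ → ℝ) (y q q' : ℝ)
    (hq : q ∈ Set.Icc (0 : ℝ) 1) (hq' : q' ∈ Set.Icc (0 : ℝ) 1)
    (hsign : S q * S q' ≤ 0) (hne : ¬(S q = 0 ∧ S q' = 0)) :
    let τ := |S q'| / (|S q| + |S q'|)
    τ * S q * (y - q) + (1 - τ) * S q' * (y - q') = τ * S q * (q' - q) := by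
  intro τ
  have hD : 0 < |S q| + |S q'| := by
    rcases (not_and_or.mp hne) with h | h
    · have := abs_pos.mpr h
      positivity
    · have := abs_pos.mpr h
      positivity
  have habs : |S q'| * S q + |S q| * S q' = 0 := by
    rcases abs_cases (S q) with ⟨h1, h2⟩ | ⟨h1, h2⟩ <;>
      rcases abs_cases (S q') with ⟨h3, h4⟩ | ⟨h3, h4⟩ <;> nlinarith
  have hkey : (1 - τ) * S q' = -(τ * S q) := by
    have hτ : τ * S q + (1 - τ) * S q' = 0 := by
      have : τ = |S q'| / (|S q| + |S q'|) := rfl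
      rw [this]
      field_simp
      linarith [habs]
    linarith
  rw [hkey]; ring
end

section
/- Let S : [0,1] → ℝ, let q, q' ∈ [0,1] with S(q)·S(q') ≤ 0 and not both zero, let τ = |S(q')|/(|S(q)| + |S(q')|), and suppose |q − q'| ≤ ε and |S(q)| ≤ M. Then for every y ∈ {0,1}, τ·S(q)(y − q) + (1−τ)·S(q')(y − q') ≤ ε·M. -/
/-- Hedging bound: with τ = |S(q')|/(|S(q)|+|S(q')|), opposite signs, |q − q'| ≤ ε
and |S(q)| ≤ M, for every y ∈ {0,1},
τ·S(q)(y − q) + (1−τ)·S(q')(y − q') ≤ ε·M. -/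
theorem forecast_hedging_bound (S : ℝ → ℝ) (y q q' ε M : ℝ)
    (hq : q ∈ Set.Icc (0 : ℝ) 1) (hq' : q' ∈ Set.Icc (0 : ℝ) 1)
    (hsign : S q * S q' ≤ 0) (hne : ¬(S q = 0 ∧ S q' = 0))
    (hεq : |q - q'| ≤ ε) (hM : |S q| ≤ M) (hy : y = 0 ∨ y = 1) :
    let τ := |S q'| / (|S q| + |S q'|)
    τ * S q * (y - q) + (1 - τ) * S q' * (y - q') ≤ ε * M := by
  intro τ
  set a := S q with ha
  set b := S q' with hb
  have hD : 0 < |a| + |b| := by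
    rcases lt_or_eq_of_le (by positivity : (0:ℝ) ≤ |a| + |b|) with h | h
    · exact h
    · exfalso
      refine hne ⟨?_, ?_⟩ <;> [skip; skip] <;>
        · have h1 : |a| = 0 ∧ |b| = 0 := by
            constructor <;> nlinarith [abs_nonneg a, abs_nonneg b]
          simp only [abs_eq_zero] at h1
          tauto
  have hkey : |a| * b = -(|b| * a) := by
    rcases mul_nonpos_iff.mp hsign with ⟨h1, h2⟩ | ⟨h1, h2⟩
    · rw [abs_of_nonpos h2, abs_of_nonneg h1]; ring
    · rw [abs_of_nonneg h2, abs_of_nonpos h1]; ring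
  set c := τ * a with hc
  have h1τ : (1 - τ) * b = -c := by
    have : 1 - τ = |a| / (|a| + |b|) := by
      simp only [τ]
      rw [eq_div_iff hD.ne', sub_mul, div_mul_cancel₀ _ hD.ne']; ring
    rw [this, hc]
    simp only [τ]
    rw [div_mul_eq_mul_div, hkey]; ring
  have heq : τ * a * (y - q) + (1 - τ) * b * (y - q') = c * (q' - q) := by
    rw [h1τ]; ring
  rw [heq]
  have hcabs : |c| ≤ M := by
    have hτ1 : τ ≤ 1 := by
      rw [div_le_one hD]; linarith [abs_nonneg a]
    have hτ0 : 0 ≤ τ := by positivity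
    calc |c| = τ * |a| := by rw [hc, abs_mul, abs_of_nonneg hτ0]
    _ ≤ 1 * |a| := by nlinarith [abs_nonneg a]
    _ ≤ M := by linarith
  calc c * (q' - q) ≤ |c * (q' - q)| := le_abs_self _
    _ = |c| * |q - q'| := by rw [abs_mul, abs_sub_comm]
    _ ≤ M * ε := by
        have := abs_nonneg (q - q')
        have hM0 : 0 ≤ M := le_trans (abs_nonneg a) hM
        nlinarith [abs_nonneg c]
    _ = ε * M := mul_comm _ _
end
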